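/- Let H be a real Hilbert space, μ ∈ ℝ, and let A be a bounded self-adjoint linear operator on H satisfying ⟨A v, v⟩ ≤ μ ‖v‖² for all v ∈ H. Let k ≥ 1 and v₁, …, v_k ∈ H. For each j ∈ {1, …, k}, let G_j^A be the k × k real matrix whose (a, b) entry equals ⟨A v_j, v_b⟩ if a = j, and ⟨v_a, v_b⟩ if a ≠ j. Then Σ_{j=1}^k det G_j^A ≤ k μ · det [⟨v_a, v_b⟩]_{a,b=1,…,k}. (This is the min-max bound on k-dimensional volume growth rates: the quadratic form of Â^{(k)} on the k-blade v₁ ∧ ⋯ ∧ v_k is at most k μ times the squared blade norm.) -/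

import Mathlib

/-!
Write `G` for the Gram matrix of `v` and `M = (⟪A v_a, v_b⟫)`. Expanding `det G_j^A` along its
row `j` gives `∑ j, det G_j^A = tr (M adj G)`, while `tr (G adj G) = k det G`. The bound on `A`
says exactly that the quadratic form of `μ G - M` is nonnegative, and `adj G = adj S * adj S` with
`S = √G` is positive semidefinite, so `tr (adj G (μ G - M)) ≥ 0`.
-/

open scoped RealInnerProductSpace

open Matrix

namespace Matrix

variable {n : Type*} [Fintype n] [DecidableEq n]

theorem det_updateRow_eq_sum_mul_adjugate {R : Type*} [CommRing R] (A : Matrix n n R) (j : n)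
    (r : n → R) : (A.updateRow j r).det = ∑ i, r i * adjugate A i j := by
  rw [← cramer_transpose_apply, cramer_eq_adjugate_mulVec, ← adjugate_transpose]
  simp only [mulVec, dotProduct, transpose_apply, mul_comm]

theorem sum_det_updateRow_eq_trace_mul_adjugate {R : Type*} [CommRing R] (A M : Matrix n n R) :
    ∑ j, (A.updateRow j (M j)).det = (M * adjugate A).trace := by
  simp only [det_updateRow_eq_sum_mul_adjugate, trace, diag_apply, mul_apply]

open scoped ComplexOrder MatrixOrder in
theorem PosSemidef.adjugate {𝕜 : Type*} [RCLike 𝕜] {A : Matrix n n 𝕜} (hA : A.PosSemidef) :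
    A.adjugate.PosSemidef := by
  have hS : (CFC.sqrt A).IsHermitian := (CFC.sqrt_nonneg A).posSemidef.isHermitian
  rw [← CFC.sqrt_mul_sqrt_self A hA.nonneg, adjugate_mul_distrib]
  nth_rewrite 1 [← hS.eq, ← adjugate_conjTranspose]
  exact posSemidef_conjTranspose_mul_self _

omit [DecidableEq n] in
theorem PosSemidef.trace_mul_nonneg {P Q : Matrix n n ℝ} (hP : P.PosSemidef)
    (hQ : ∀ x, 0 ≤ x ⬝ᵥ Q *ᵥ x) : 0 ≤ (P * Q).trace := by
  obtain ⟨m, u, rfl⟩ := posSemidef_iff_eq_sum_vecMulVec.mp hP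
  simp only [Finset.sum_mul, trace_sum, vecMulVec_mul, trace_vecMulVec, star_trivial]
  refine Finset.sum_nonneg fun i _ => ?_
  rw [dotProduct_comm, ← dotProduct_mulVec]
  exact hQ (u i)

end Matrix

theorem dotProduct_inner_map_mulVec {ι E F : Type*} [Fintype ι] [NormedAddCommGroup E]
    [InnerProductSpace ℝ E] [FunLike F E E] [LinearMapClass F ℝ E E] (B : F) (v : ι → E)
    (x : ι → ℝ) :
    x ⬝ᵥ (of fun a b => ⟪B (v a), v b⟫) *ᵥ x = ⟪B (∑ a, x a • v a), ∑ a, x a • v a⟫ := by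
  simp only [mulVec, dotProduct, of_apply, map_sum, map_smul, sum_inner, inner_sum,
    real_inner_smul_left, real_inner_smul_right, Finset.mul_sum]
  rw [Finset.sum_comm]
  exact Finset.sum_congr rfl fun _ _ => Finset.sum_congr rfl fun _ _ => by ring

theorem wedge_derivation_minmax_bound_general
    {H : Type*} [NormedAddCommGroup H] [InnerProductSpace ℝ H]
    (μ : ℝ) (A : H →L[ℝ] H)
    (hA_bound : ∀ v : H, ⟪A v, v⟫ ≤ μ * ‖v‖ ^ 2)
    (k : ℕ) (v : Fin k → H) :
    ∑ j : Fin k, Matrix.det (Matrix.of fun a b : Fin k =>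
        if a = j then ⟪A (v j), v b⟫ else ⟪v a, v b⟫)
      ≤ (k : ℝ) * μ * Matrix.det (Matrix.of fun a b : Fin k => ⟪v a, v b⟫) := by
  set G := gram ℝ v
  set M := of fun a b : Fin k => ⟪A (v a), v b⟫
  have hrows : ∀ j, (of fun a b : Fin k => if a = j then ⟪A (v j), v b⟫ else ⟪v a, v b⟫)
      = G.updateRow j (M j) := fun j => by
    ext a b
    simp [updateRow_apply, G, M, gram_apply]
  have hQ : ∀ x, 0 ≤ x ⬝ᵥ (μ • G - M) *ᵥ x := fun x => by
    have hG := star_dotProduct_gram_mulVec (𝕜 := ℝ) v x x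
    have hM := dotProduct_inner_map_mulVec A v x
    rw [star_trivial, real_inner_self_eq_norm_sq] at hG
    rw [sub_mulVec, smul_mulVec, dotProduct_sub, dotProduct_smul, hG, hM, smul_eq_mul]
    exact sub_nonneg.mpr (hA_bound _)
  have htrace : (adjugate G * (μ • G - M)).trace = k * μ * G.det - (adjugate G * M).trace := by
    rw [Matrix.mul_sub, Matrix.mul_smul, trace_sub, trace_smul, adjugate_mul, trace_smul,
      trace_one, Fintype.card_fin, smul_eq_mul, smul_eq_mul]
    ring
  calc ∑ j, (of fun a b : Fin k => if a = j then ⟪A (v j), v b⟫ else ⟪v a, v b⟫).det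
      = (adjugate G * M).trace := by
        simp only [hrows, sum_det_updateRow_eq_trace_mul_adjugate, trace_mul_comm M]
    _ ≤ k * μ * G.det := by
        linarith [(posSemidef_gram ℝ v).adjugate.trace_mul_nonneg hQ]

/-- Min-max bound on `k`-dimensional volume growth rates: if `⟪A v, v⟫ ≤ μ ‖v‖²` for a
bounded self-adjoint operator `A`, then the quadratic form of `Â⁽ᵏ⁾` on the `k`-blade
`v₁ ∧ ⋯ ∧ v_k`, namely `Σ_j det G_j^A`, is at most `k μ` times the Gram determinant. -/
theorem wedge_derivation_minmax_bound
    {H : Type*} [NormedAddCommGroup H] [InnerProductSpace ℝ H] [CompleteSpace H]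
    (μ : ℝ) (A : H →L[ℝ] H)
    (hA_sa : ∀ v w : H, ⟪A v, w⟫ = ⟪v, A w⟫)
    (hA_bound : ∀ v : H, ⟪A v, v⟫ ≤ μ * ‖v‖ ^ 2)
    (k : ℕ) (hk : 1 ≤ k) (v : Fin k → H) :
    ∑ j : Fin k, Matrix.det (Matrix.of fun a b : Fin k =>
        if a = j then ⟪A (v j), v b⟫ else ⟪v a, v b⟫)
      ≤ (k : ℝ) * μ * Matrix.det (Matrix.of fun a b : Fin k => ⟪v a, v b⟫) :=
  wedge_derivation_minmax_bound_general μ A hA_bound k v
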